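/- Let G be the graph with vertex set T and edges {t't : t' ∈ A*_t}. Then every uncountable set A ⊆ T of vertices contains two distinct vertices t and t' such that there are only finitely many pairwise internally disjoint t–t' paths in G; that is, every family of t–t' paths in G, any two of which meet only in t and t', is finite. -/
import Mathlib


/-- An element of the tree `T`: an injective, co-infinite sequence `t : α → ℕ`
(with `ℕ = {1,2,3,…}`) of countable ordinal length `α`.  We encode such a
sequence as a total function `f : Ordinal → ℕ` taking a *positive* value
exactly on the ordinals `β < len` (the value `0` plays the role of
"undefined", which is harmless since the paper's `ℕ` starts at `1`). -/
structure CSeq where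
  /-- the length (domain) of the sequence, a countable ordinal -/
  len : Ordinal
  len_countable : len < Ordinal.omega 1
  /-- the sequence itself, with `f β = 0` meaning "β is outside the domain" -/
  f : Ordinal → ℕ
  dom_iff : ∀ β, β < len ↔ f β ≠ 0
  inj : ∀ β γ, β < len → γ < len → f β = f γ → β = γ
  coinf : {n : ℕ | n ≠ 0 ∧ n ∉ Set.range f}.Infinite

namespace CSeq

/-- the extension order on `T`: `s ≤ t` iff `s = t ↾ dom s`. -/
def Ext (s t : CSeq) : Prop := ∀ β, s.f β ≠ 0 → t.f β = s.f β

/-- strict extension: `s < t`. -/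
def ExtLt (s t : CSeq) : Prop := s.Ext t ∧ s ≠ t

/-- the image `im t ⊆ ℕ = {1,2,…}` of a sequence `t`. -/
def im (t : CSeq) : Set ℕ := {n | n ≠ 0 ∧ n ∈ Set.range t.f}

/-- `t ∈ Σ(T)`: the length of `t` is a successor ordinal. -/
def IsSucc (t : CSeq) : Prop := ∃ α, t.len = α + 1

/-- `last t`: the last value of a sequence (of successor length). -/
noncomputable def lastVal (t : CSeq) : ℕ := t.f (Ordinal.pred t.len)

/-- the restriction `t ↾ γ` of a sequence `t` to an initial segment `γ ≤ dom t`. -/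
noncomputable def restrict (t : CSeq) (γ : Ordinal) (h : γ ≤ t.len) : CSeq where
  len := γ
  len_countable := lt_of_le_of_lt h t.len_countable
  f := fun β => if β < γ then t.f β else 0
  dom_iff := by
    intro β
    constructor
    · intro hβ
      simpa [hβ] using (t.dom_iff β).1 (lt_of_lt_of_le hβ h)
    · intro hβ
      by_contra hc
      simp [hc] at hβ
  inj := by
    intro β γ' hβ hγ
    simp only [if_pos hβ, if_pos hγ]
    exact t.inj β γ' (lt_of_lt_of_le hβ h) (lt_of_lt_of_le hγ h)
  coinf := t.coinf.mono (by
    rintro n ⟨hn0, hn⟩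
    refine ⟨hn0, ?_⟩
    rintro ⟨β, hβ⟩
    by_cases hb : β < γ
    · exact hn ⟨β, by simpa [hb] using hβ⟩
    · simp only [if_neg hb] at hβ
      exact hn0 hβ.symm)

/-- `t* := t ↾ α` for `t` of successor length `α + 1`: the immediate
predecessor of `t` in the tree. -/
noncomputable def star (t : CSeq) : CSeq := t.restrict (Ordinal.pred t.len) (Ordinal.pred_le_self _)

/-- `A_t := {s ≤ t : s ∈ Σ(T), last s = min (im t \ im s*)}`. -/
def A (t : CSeq) : Set CSeq :=
  {s | s.Ext t ∧ s.IsSucc ∧ s.lastVal = sInf (t.im \ s.star.im)}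

/-- `A*_t := {s* : s ∈ A_t}`. -/
def Astar (t : CSeq) : Set CSeq := star '' A t

/-- the graph `G` with vertex set `T` and edges `{t't : t' ∈ A*_t}`. -/
def G : SimpleGraph CSeq := SimpleGraph.fromRel (fun t' t => t' ∈ Astar t)

/-- the graph `G'` with vertex set `T` and edges `{t't : t' ∈ A_t}`. -/
def G' : SimpleGraph CSeq := SimpleGraph.fromRel (fun t' t => t' ∈ A t)

/-- two `t`–`t'` paths are independent (internally disjoint) if they share no
vertices other than `t` and `t'`. -/
def InternallyDisjoint {t t' : CSeq} (p q : G.Path t t') : Prop :=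
  ∀ v, v ∈ p.1.support → v ∈ q.1.support → v = t ∨ v = t'

/-- `t'` is a `k`-extension of `t ∈ Σ(T)` if `t' > t` and every element of
`im t' \ im t` is greater than `a_{k+1}`, where `a_1 < … < a_{k+1}` are the
`k+1` smallest elements of `ℕ \ (im t ∪ [last t])`.  (Recall `Nat.nth p k` is
the `(k+1)`-st element of `{n | p n}` in increasing order.) -/
def IsKExt (k : ℕ) (t t' : CSeq) : Prop :=
  t.ExtLt t' ∧ ∀ n ∈ t'.im \ t.im,
    Nat.nth (fun m => m ∉ t.im ∧ t.lastVal < m) k < n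

end CSeq


namespace CSeq

lemma eq_of_f_eq {s t : CSeq} (h : s.f = t.f) : s = t := by
  have hlen : s.len = t.len := by
    apply le_antisymm
    · apply le_of_forall_lt; intro c hc
      exact (t.dom_iff c).2 (by rw [← h]; exact (s.dom_iff c).1 hc)
    · apply le_of_forall_lt; intro c hc
      exact (s.dom_iff c).2 (by rw [h]; exact (t.dom_iff c).1 hc)
  cases s; cases t
  dsimp at hlen h
  subst hlen; subst h
  rfl

lemma ext_trans {s t u : CSeq} (h1 : s.Ext t) (h2 : t.Ext u) : s.Ext u := by
  intro β hβ
  rw [h2 β (by rw [h1 β hβ]; exact hβ), h1 β hβ]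

lemma ext_len_le {s t : CSeq} (h : s.Ext t) : s.len ≤ t.len := by
  apply le_of_forall_lt; intro c hc
  have hc' := (s.dom_iff c).1 hc
  exact (t.dom_iff c).2 (by rw [h c hc']; exact hc')

lemma eq_of_ext_len {s t : CSeq} (h : s.Ext t) (hl : s.len = t.len) : s = t := by
  apply eq_of_f_eq; funext β
  by_cases hβ : β < s.len
  · exact ((h β ((s.dom_iff β).1 hβ))).symm
  · have h1 : s.f β = 0 := not_ne_iff.1 (fun hne => hβ ((s.dom_iff β).2 hne))
    have h2 : t.f β = 0 := by
      by_contra hne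
      exact hβ (by rw [hl]; exact (t.dom_iff β).2 hne)
    rw [h1, h2]

lemma len_lt_of_ext_ne {s t : CSeq} (h : s.Ext t) (hne : s ≠ t) : s.len < t.len :=
  lt_of_le_of_ne (ext_len_le h) (fun he => hne (eq_of_ext_len h he))

lemma restrict_ext (t : CSeq) (γ : Ordinal) (h : γ ≤ t.len) : (t.restrict γ h).Ext t := by
  intro β hβ
  by_cases hc : β < γ
  · simp [restrict, hc]
  · exfalso; apply hβ; simp [restrict, hc]

lemma mem_Astar_elim {v w : CSeq} (h : v ∈ Astar w) :
    v.Ext w ∧ v.len < w.len ∧ w.f v.len = sInf (w.im \ v.im) := by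
  obtain ⟨s, hsA, rfl⟩ := h
  obtain ⟨hext, ⟨α, hα⟩, hlast⟩ := hsA
  have hpred : Ordinal.pred s.len = α := by
    rw [hα, Ordinal.add_one_eq_succ, Ordinal.pred_succ]
  have hl : (star s).len = α := hpred
  have hαs : α < s.len := by
    rw [hα, Ordinal.add_one_eq_succ]; exact Order.lt_succ α
  have hf : s.f α ≠ 0 := (s.dom_iff α).1 hαs
  have hw : w.f α = s.f α := hext α hf
  have hstarext : (star s).Ext s := restrict_ext s _ _
  have hlast' : s.f α = sInf (w.im \ (star s).im) := by
    unfold lastVal at hlast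
    rw [hpred] at hlast
    exact hlast
  refine ⟨ext_trans hstarext hext, ?_, ?_⟩
  · rw [hl]
    exact (w.dom_iff α).2 (by rw [hw]; exact hf)
  · rw [hl, hw, hlast']

/-- From a walk between a vertex satisfying `Q` and one not satisfying `Q`,
extract an exit edge. -/
lemma exists_exit {V : Type*} {H : SimpleGraph V} (Q : V → Prop) {x y : V}
    (w : H.Walk x y) (hx : Q x) (hy : ¬ Q y) :
    ∃ u v, H.Adj u v ∧ Q u ∧ ¬ Q v ∧ v ∈ w.support := by
  induction w with
  | nil => exact absurd hx hy
  | @cons a b c h p ih =>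
    by_cases hb : Q b
    · obtain ⟨u, v, h1, h2, h3, h4⟩ := ih hb hy
      exact ⟨u, v, h1, h2, h3, by
        rw [SimpleGraph.Walk.support_cons]; exact List.mem_cons_of_mem _ h4⟩
    · exact ⟨a, b, h, hx, hb, by
        rw [SimpleGraph.Walk.support_cons]
        exact List.mem_cons_of_mem _ p.start_mem_support⟩

/-- An uncountable subset of `T` contains two incomparable elements. -/
lemma exists_incomp (A : Set CSeq) (hA : ¬ A.Countable) :
    ∃ t ∈ A, ∃ t' ∈ A, ¬ t.Ext t' ∧ ¬ t'.Ext t := by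
  by_contra hcon
  push_neg at hcon
  have hchain : ∀ t ∈ A, ∀ t' ∈ A, t.Ext t' ∨ t'.Ext t := by
    intro t ht t' ht'
    by_cases h : t.Ext t'
    · exact Or.inl h
    · exact Or.inr (hcon t ht t' ht' h)
  apply hA
  rw [Set.countable_iff_exists_injective]
  classical
  refine ⟨fun x => if h : ∃ u ∈ A, (x : CSeq).Ext u ∧ (x : CSeq) ≠ u
    then h.choose.f (x : CSeq).len else 0, ?_⟩
  intro x y hxy
  dsimp only at hxy
  by_cases h1 : ∃ u ∈ A, (x : CSeq).Ext u ∧ (x : CSeq) ≠ u <;>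
    by_cases h2 : ∃ u ∈ A, (y : CSeq).Ext u ∧ (y : CSeq) ≠ u
  · rw [dif_pos h1, dif_pos h2] at hxy
    obtain ⟨huA, hxu, hxun⟩ := h1.choose_spec
    obtain ⟨hvA, hyv, hyvn⟩ := h2.choose_spec
    have hxlt : (x : CSeq).len < h1.choose.len := len_lt_of_ext_ne hxu hxun
    have hylt : (y : CSeq).len < h2.choose.len := len_lt_of_ext_ne hyv hyvn
    have hx0 : h1.choose.f (x : CSeq).len ≠ 0 := (h1.choose.dom_iff _).1 hxlt
    have hy0 : h2.choose.f (y : CSeq).len ≠ 0 := (h2.choose.dom_iff _).1 hylt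
    have hlen : (x : CSeq).len = (y : CSeq).len := by
      rcases hchain _ huA _ hvA with h | h
      · have e1 : h2.choose.f (x : CSeq).len = h1.choose.f (x : CSeq).len := h _ hx0
        exact h2.choose.inj _ _
          ((h2.choose.dom_iff _).2 (by rw [e1]; exact hx0)) hylt (by rw [e1, hxy])
      · have e2 : h1.choose.f (y : CSeq).len = h2.choose.f (y : CSeq).len := h _ hy0
        exact h1.choose.inj _ _ hxlt
          ((h1.choose.dom_iff _).2 (by rw [e2]; exact (hxy ▸ hx0))) (by rw [e2, ← hxy])
    apply Subtype.ext
    rcases hchain _ x.2 _ y.2 with h | h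
    · exact eq_of_ext_len h hlen
    · exact (eq_of_ext_len h hlen.symm).symm
  · rw [dif_pos h1, dif_neg h2] at hxy
    obtain ⟨huA, hxu, hxun⟩ := h1.choose_spec
    exact absurd hxy ((h1.choose.dom_iff _).1 (len_lt_of_ext_ne hxu hxun))
  · rw [dif_neg h1, dif_pos h2] at hxy
    obtain ⟨hvA, hyv, hyvn⟩ := h2.choose_spec
    exact absurd hxy.symm ((h2.choose.dom_iff _).1 (len_lt_of_ext_ne hyv hyvn))
  · apply Subtype.ext
    by_cases he : (x : CSeq) = (y : CSeq)
    · exact he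
    · exfalso
      rcases hchain _ x.2 _ y.2 with h | h
      · exact h1 ⟨y, y.2, h, he⟩
      · exact h2 ⟨x, x.2, h, Ne.symm he⟩

/-- The key combinatorial fact: between incomparable `t` and `t'`, internally
disjoint path families are finite. -/
lemma key_finite (t t' : CSeq) (h1 : ¬ t.Ext t') (h2 : ¬ t'.Ext t) :
    ∀ P : Set (G.Path t t'),
      (∀ p ∈ P, ∀ q ∈ P, p ≠ q → InternallyDisjoint p q) → P.Finite := by
  classical
  intro P hP
  -- a position where t and t' differ
  have hS : ∃ δ, δ < t.len ∧ δ < t'.len ∧ t.f δ ≠ t'.f δ := by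
    by_contra hc
    push_neg at hc
    rcases le_total t.len t'.len with hle | hle
    · refine h1 (fun β hβ => ?_)
      have hβt : β < t.len := (t.dom_iff β).2 hβ
      exact (hc β hβt (lt_of_lt_of_le hβt hle)).symm
    · refine h2 (fun β hβ => ?_)
      have hβt' : β < t'.len := (t'.dom_iff β).2 hβ
      exact hc β (lt_of_lt_of_le hβt' hle) hβt'
  obtain ⟨δ, hδt, hδt', hdiff⟩ := hS
  have ha0 : t.f δ ≠ 0 := (t.dom_iff δ).1 hδt
  -- the branch of t above δ
  set Br : CSeq → Prop := fun w => δ < w.len ∧ ∀ β ≤ δ, w.f β = t.f β with hBr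
  have hBt : Br t := ⟨hδt, fun β _ => rfl⟩
  have hBt' : ¬ Br t' := fun hb => hdiff (hb.2 δ le_rfl).symm
  -- the finite set of possible crossing vertices
  set Vset : Set CSeq :=
    {v | v.len ≤ δ ∧ (∀ β, v.f β = if β < v.len then t.f β else 0) ∧ t.f v.len ≤ t.f δ}
    with hVset
  have Vfin : Vset.Finite := by
    have hinj : Set.InjOn (fun v : CSeq => t.f v.len) Vset := by
      intro v1 hv1 v2 hv2 heq
      have hlen : v1.len = v2.len :=
        t.inj _ _ (lt_of_le_of_lt hv1.1 hδt) (lt_of_le_of_lt hv2.1 hδt) heq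
      apply eq_of_f_eq
      funext β
      rw [hv1.2.1 β, hv2.2.1 β, hlen]
    have himg : ((fun v : CSeq => t.f v.len) '' Vset) ⊆ Set.Iic (t.f δ) := by
      rintro _ ⟨v, hv, rfl⟩; exact hv.2.2
    exact Set.Finite.of_finite_image ((Set.finite_Iic (t.f δ)).subset himg) hinj
  -- exit edges land in Vset
  have hcross : ∀ u v, Br u → ¬ Br v → G.Adj u v → v ∈ Vset := by
    intro u v hu hv hadj
    obtain ⟨hne', hor⟩ := (SimpleGraph.fromRel_adj _ u v).1 hadj
    rcases hor with hU | hV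
    · exfalso
      obtain ⟨hext, hltlen, -⟩ := mem_Astar_elim hU
      refine hv ⟨lt_trans hu.1 hltlen, fun β hβ => ?_⟩
      have hβu : β < u.len := lt_of_le_of_lt hβ hu.1
      rw [hext β ((u.dom_iff β).1 hβu)]
      exact hu.2 β hβ
    · obtain ⟨hext, hltlen, hsinf⟩ := mem_Astar_elim hV
      have hvlen : v.len ≤ δ := by
        by_contra hc
        push_neg at hc
        refine hv ⟨hc, fun β hβ => ?_⟩
        have hβv : β < v.len := lt_of_le_of_lt hβ hc
        have hne0 : v.f β ≠ 0 := (v.dom_iff β).1 hβv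
        calc v.f β = u.f β := (hext β hne0).symm
        _ = t.f β := hu.2 β hβ
      have hfv : ∀ β, v.f β = if β < v.len then t.f β else 0 := by
        intro β
        by_cases hβ : β < v.len
        · rw [if_pos hβ]
          have hne0 : v.f β ≠ 0 := (v.dom_iff β).1 hβ
          calc v.f β = u.f β := (hext β hne0).symm
          _ = t.f β := hu.2 β (le_of_lt (lt_of_lt_of_le hβ hvlen))
        · rw [if_neg hβ]
          by_contra hne0
          exact hβ ((v.dom_iff β).2 hne0)
      refine ⟨hvlen, hfv, ?_⟩
      have hufv : u.f v.len = t.f v.len := hu.2 _ hvlen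
      have hmem : t.f δ ∈ u.im \ v.im := by
        constructor
        · exact ⟨ha0, ⟨δ, hu.2 δ le_rfl⟩⟩
        · rintro ⟨hne0, β, hβ⟩
          have hβv : β < v.len := (v.dom_iff β).2 (by rw [hβ]; exact ha0)
          have hvt : v.f β = t.f β := by rw [hfv β, if_pos hβv]
          have hβδ : β < δ := lt_of_lt_of_le hβv hvlen
          have heq : β = δ := t.inj β δ (hβδ.trans hδt) hδt (by rw [← hvt, hβ])
          exact absurd heq (ne_of_lt hβδ)
      calc t.f v.len = u.f v.len := hufv.symm
      _ = sInf (u.im \ v.im) := hsinf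
      _ ≤ t.f δ := Nat.sInf_le hmem
  -- every t-t' path contains a crossing vertex
  have hpath : ∀ p : G.Path t t', ∃ v, v ∈ Vset ∧ v ∈ p.1.support := by
    intro p
    obtain ⟨u, v, hadj, hu, hv, hmem⟩ := exists_exit Br p.1 hBt hBt'
    exact ⟨v, hcross u v hu hv hadj, hmem⟩
  have hVne : ∀ v ∈ Vset, v ≠ t ∧ v ≠ t' := by
    intro v hv
    constructor
    · intro he
      exact absurd (lt_of_le_of_lt hv.1 hδt) (by rw [he]; exact lt_irrefl _)
    · intro he
      exact absurd (lt_of_le_of_lt hv.1 hδt') (by rw [he]; exact lt_irrefl _)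
  -- injection from P into Vset
  set g : G.Path t t' → CSeq := fun p => (hpath p).choose with hg
  have hgspec : ∀ p, g p ∈ Vset ∧ g p ∈ p.1.support := fun p => (hpath p).choose_spec
  apply Set.Finite.of_finite_image (f := g)
  · refine Vfin.subset ?_
    rintro _ ⟨p, hp, rfl⟩
    exact (hgspec p).1
  · intro p hp q hq hpq
    by_contra hne'
    have hd := hP p hp q hq hne'
    have hp1 := (hgspec p).2
    have hq1 : g p ∈ q.1.support := hpq ▸ (hgspec q).2
    rcases hd (g p) hp1 hq1 with h | h
    · exact (hVne _ (hgspec p).1).1 h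
    · exact (hVne _ (hgspec p).1).2 h

end CSeq

open CSeq in
/-- Every uncountable set `A` of vertices of `G` contains two
distinct vertices `t, t'` such that every family of pairwise internally
disjoint `t`–`t'` paths in `G` is finite. -/
theorem stmt2 (A : Set CSeq) (hA : ¬ A.Countable) :
    ∃ t ∈ A, ∃ t' ∈ A, t ≠ t' ∧
      ∀ P : Set (G.Path t t'),
        (∀ p ∈ P, ∀ q ∈ P, p ≠ q → InternallyDisjoint p q) → P.Finite := by
  obtain ⟨t, ht, t', ht', h1, h2⟩ := exists_incomp A hA
  have hne : t ≠ t' := fun he => h1 (by rw [he]; intro β _; rfl)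
  exact ⟨t, ht, t', ht', hne, key_finite t t' h1 h2⟩
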